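/- Let μ1, μ2, μ3, μ4, μ5, μ6, λ1, λ2 ∈ ℝ satisfy λ1 = μ2 − μ3, λ2 = μ5 − μ6, Parodi's relation μ2 + μ3 = μ6 − μ5, and the dissipativity conditions λ1 < 0, μ1 − λ2²/λ1 ≥ 0, μ4 > 0, μ5 + μ6 ≥ −λ2²/λ1. Let A be a real symmetric 2×2 matrix, Ω a real skew-symmetric 2×2 matrix, d, h ∈ ℝ³, s ∈ ℝ, d̂ = (d₁, d₂), ĥ = (h₁, h₂), and suppose N ∈ ℝ³ satisfies λ1 N = −λ2 (Ad̂, 0) − (h + s d) + λ2 (d̂ᵀAd̂) d; set N̂ = (N₁, N₂) and σ_{ij} = μ1 (d̂ᵀAd̂) d̂_i d̂_j + μ2 N̂_i d̂_j + μ3 N̂_j d̂_i + μ4 A_{ij} + μ5 (Ad̂)_i d̂_j + μ6 (Ad̂)_j d̂_i. Then Σ_{i,j=1}^{2} σ_{ij}(A_{ij} + Ω_{ij}) − ⟨(λ2/λ1) Ad̂ − Ωd̂, ĥ⟩ − (λ2/λ1) s (d̂ᵀAd̂) ≥ μ4 Σ_{i,j} A_{ij}². -/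

import Mathlib

open Finset Matrix

/-- Embedding of `ℝ²` into `ℝ³` with vanishing third component. -/
def emb (v : Fin 2 → ℝ) (k : Fin 3) : ℝ :=
  if h : (k : ℕ) < 2 then v ⟨k, h⟩ else 0

/-!
Since `A` is symmetric and `Ω` skew, the stress power `σ : (A + Ω)` is a combination of the
invariants `d̂ᵀAd̂`, `N̂ · Ad̂`, `N̂ · Ωd̂`, `|A|²`, `|Ad̂|²` and `Ad̂ · Ωd̂`. Substituting `ĥ` from
the director equation, the Leslie relations and Parodi's relation cancel every term containing
`N̂`, `Ωd̂` or `s`, leaving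
`μ4 |A|² + (μ1 - λ2²/λ1) (d̂ᵀAd̂)² + (μ5 + μ6 + λ2²/λ1) |Ad̂|²`,
whose last two terms are nonnegative by the dissipativity conditions.
-/

section
variable {ι R : Type*} [Fintype ι]

def frobeniusPairing [CommSemiring R] (X Y : Matrix ι ι R) : R := ∑ i, ∑ j, X i j * Y i j

section CommSemiring
variable [CommSemiring R]

@[simp] lemma frobeniusPairing_add_left (X Y M : Matrix ι ι R) :
    frobeniusPairing (X + Y) M = frobeniusPairing X M + frobeniusPairing Y M := by
  simp only [frobeniusPairing, Matrix.add_apply, add_mul, sum_add_distrib]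

@[simp] lemma frobeniusPairing_add_right (M X Y : Matrix ι ι R) :
    frobeniusPairing M (X + Y) = frobeniusPairing M X + frobeniusPairing M Y := by
  simp only [frobeniusPairing, Matrix.add_apply, mul_add, sum_add_distrib]

@[simp] lemma frobeniusPairing_smul_left (c : R) (X M : Matrix ι ι R) :
    frobeniusPairing (c • X) M = c * frobeniusPairing X M := by
  simp only [frobeniusPairing, Matrix.smul_apply, smul_eq_mul, mul_sum, mul_assoc]

lemma dotProduct_mulVec_eq_sum_sum (u v : ι → R) (M : Matrix ι ι R) :
    u ⬝ᵥ M *ᵥ v = ∑ i, ∑ j, M i j * u i * v j := by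
  simp only [dotProduct, mulVec, mul_sum]
  exact sum_congr rfl fun i _ => sum_congr rfl fun j _ => by ring

@[simp] lemma frobeniusPairing_vecMulVec_left (u v : ι → R) (M : Matrix ι ι R) :
    frobeniusPairing (vecMulVec u v) M = u ⬝ᵥ M *ᵥ v := by
  rw [dotProduct_mulVec_eq_sum_sum, frobeniusPairing]
  exact sum_congr rfl fun i _ => sum_congr rfl fun j _ => by rw [vecMulVec_apply]; ring

lemma frobeniusPairing_self (X : Matrix ι ι R) : frobeniusPairing X X = ∑ i, ∑ j, X i j ^ 2 := by
  simp only [frobeniusPairing, sq]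

lemma frobeniusPairing_transpose (X Y : Matrix ι ι R) :
    frobeniusPairing Xᵀ Yᵀ = frobeniusPairing X Y := by
  rw [frobeniusPairing, sum_comm]; rfl

end CommSemiring

section CommRing
variable [CommRing R] [NoZeroDivisors R] [CharZero R]

lemma frobeniusPairing_eq_zero_of_isSymm_of_transpose_eq_neg {A Ω : Matrix ι ι R}
    (hA : A.IsSymm) (hΩ : Ωᵀ = -Ω) : frobeniusPairing A Ω = 0 := by
  refine self_eq_neg.mp ?_
  calc frobeniusPairing A Ω = frobeniusPairing Aᵀ Ωᵀ := (frobeniusPairing_transpose A Ω).symm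
    _ = -frobeniusPairing A Ω := by
      rw [hA.eq, hΩ]; simp only [frobeniusPairing, Matrix.neg_apply, mul_neg, sum_neg_distrib]

lemma dotProduct_mulVec_self_eq_zero_of_transpose_eq_neg {Ω : Matrix ι ι R} (hΩ : Ωᵀ = -Ω)
    (v : ι → R) : v ⬝ᵥ Ω *ᵥ v = 0 := by
  refine self_eq_neg.mp ?_
  calc v ⬝ᵥ Ω *ᵥ v = v ⬝ᵥ Ωᵀ *ᵥ v := (dotProduct_transpose_mulVec Ω v v).symm
    _ = -(v ⬝ᵥ Ω *ᵥ v) := by rw [hΩ, neg_mulVec, dotProduct_neg]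

end CommRing

def leslieStress (μ1 μ2 μ3 μ4 μ5 μ6 : ℝ) (A : Matrix ι ι ℝ) (d N : ι → ℝ) : Matrix ι ι ℝ :=
  (μ1 * (d ⬝ᵥ A *ᵥ d)) • vecMulVec d d + μ2 • vecMulVec N d + μ3 • vecMulVec d N + μ4 • A
    + μ5 • vecMulVec (A *ᵥ d) d + μ6 • vecMulVec d (A *ᵥ d)

lemma frobeniusPairing_leslieStress (μ1 μ2 μ3 μ4 μ5 μ6 : ℝ) {A Ω : Matrix ι ι ℝ}
    (hA : A.IsSymm) (hΩ : Ωᵀ = -Ω) (d N : ι → ℝ) :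
    frobeniusPairing (leslieStress μ1 μ2 μ3 μ4 μ5 μ6 A d N) (A + Ω) =
      μ1 * (d ⬝ᵥ A *ᵥ d) ^ 2 + (μ2 + μ3) * (N ⬝ᵥ A *ᵥ d) + (μ2 - μ3) * (N ⬝ᵥ Ω *ᵥ d)
        + μ4 * frobeniusPairing A A + (μ5 + μ6) * (A *ᵥ d ⬝ᵥ A *ᵥ d)
        + (μ5 - μ6) * (A *ᵥ d ⬝ᵥ Ω *ᵥ d) := by
  have hdN : d ⬝ᵥ A *ᵥ N = N ⬝ᵥ A *ᵥ d := by
    rw [← dotProduct_transpose_mulVec, hA.eq]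
  have hdΩN : d ⬝ᵥ Ω *ᵥ N = -(N ⬝ᵥ Ω *ᵥ d) := by
    rw [← dotProduct_transpose_mulVec, hΩ, neg_mulVec, dotProduct_neg]
  have hdw : d ⬝ᵥ A *ᵥ (A *ᵥ d) = A *ᵥ d ⬝ᵥ A *ᵥ d := by
    rw [← dotProduct_transpose_mulVec, hA.eq]
  have hdΩw : d ⬝ᵥ Ω *ᵥ (A *ᵥ d) = -(A *ᵥ d ⬝ᵥ Ω *ᵥ d) := by
    rw [← dotProduct_transpose_mulVec, hΩ, neg_mulVec, dotProduct_neg]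
  simp only [leslieStress, frobeniusPairing_add_left, frobeniusPairing_smul_left,
    frobeniusPairing_vecMulVec_left, frobeniusPairing_add_right,
    frobeniusPairing_eq_zero_of_isSymm_of_transpose_eq_neg hA hΩ,
    dotProduct_mulVec_self_eq_zero_of_transpose_eq_neg hΩ, hdN, hdΩN, hdw, hdΩw]
  ring

theorem leslieStress_dissipation_eq (μ1 μ2 μ3 μ4 μ5 μ6 lam1 lam2 : ℝ)
    (hlam1 : lam1 = μ2 - μ3) (hlam2 : lam2 = μ5 - μ6) (hParodi : μ2 + μ3 = μ6 - μ5)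
    (hlam1_ne : lam1 ≠ 0) {A Ω : Matrix ι ι ℝ} (hA : A.IsSymm) (hΩ : Ωᵀ = -Ω)
    (d h N : ι → ℝ) (s : ℝ)
    (hN : lam1 • N = -(lam2 • A *ᵥ d) - (h + s • d) + (lam2 * (d ⬝ᵥ A *ᵥ d)) • d) :
    frobeniusPairing (leslieStress μ1 μ2 μ3 μ4 μ5 μ6 A d N) (A + Ω)
        - ((lam2 / lam1) • A *ᵥ d - Ω *ᵥ d) ⬝ᵥ h - lam2 / lam1 * s * (d ⬝ᵥ A *ᵥ d) =
      μ4 * frobeniusPairing A A + (μ1 - lam2 ^ 2 / lam1) * (d ⬝ᵥ A *ᵥ d) ^ 2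
        + (μ5 + μ6 + lam2 ^ 2 / lam1) * (A *ᵥ d ⬝ᵥ A *ᵥ d) := by
  have hh : h = -(lam1 • N) - lam2 • A *ᵥ d - s • d + (lam2 * (d ⬝ᵥ A *ᵥ d)) • d := by
    rw [hN]; abel
  have hwd : A *ᵥ d ⬝ᵥ d = d ⬝ᵥ A *ᵥ d := dotProduct_comm _ _
  have hωd : Ω *ᵥ d ⬝ᵥ d = 0 := by
    rw [dotProduct_comm, dotProduct_mulVec_self_eq_zero_of_transpose_eq_neg hΩ]
  have hwN : A *ᵥ d ⬝ᵥ N = N ⬝ᵥ A *ᵥ d := dotProduct_comm _ _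
  have hωN : Ω *ᵥ d ⬝ᵥ N = N ⬝ᵥ Ω *ᵥ d := dotProduct_comm _ _
  have hωw : Ω *ᵥ d ⬝ᵥ A *ᵥ d = A *ᵥ d ⬝ᵥ Ω *ᵥ d := dotProduct_comm _ _
  rw [frobeniusPairing_leslieStress μ1 μ2 μ3 μ4 μ5 μ6 hA hΩ, hh]
  simp only [sub_dotProduct, dotProduct_sub, dotProduct_add, smul_dotProduct, dotProduct_smul,
    dotProduct_neg, smul_eq_mul, hwd, hωd, hwN, hωN, hωw]
  have hParodi' : μ2 + μ3 = -lam2 := by linarith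
  rw [hParodi', ← hlam1, ← hlam2]
  field_simp
  ring

theorem leslieStress_dissipation_ge (μ1 μ2 μ3 μ4 μ5 μ6 lam1 lam2 : ℝ)
    (hlam1 : lam1 = μ2 - μ3) (hlam2 : lam2 = μ5 - μ6) (hParodi : μ2 + μ3 = μ6 - μ5)
    (hlam1_ne : lam1 ≠ 0) (hμ1 : μ1 - lam2 ^ 2 / lam1 ≥ 0) (hμ56 : μ5 + μ6 ≥ -lam2 ^ 2 / lam1)
    {A Ω : Matrix ι ι ℝ} (hA : A.IsSymm) (hΩ : Ωᵀ = -Ω) (d h N : ι → ℝ) (s : ℝ)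
    (hN : lam1 • N = -(lam2 • A *ᵥ d) - (h + s • d) + (lam2 * (d ⬝ᵥ A *ᵥ d)) • d) :
    frobeniusPairing (leslieStress μ1 μ2 μ3 μ4 μ5 μ6 A d N) (A + Ω)
        - ((lam2 / lam1) • A *ᵥ d - Ω *ᵥ d) ⬝ᵥ h - lam2 / lam1 * s * (d ⬝ᵥ A *ᵥ d) ≥
      μ4 * frobeniusPairing A A := by
  rw [leslieStress_dissipation_eq μ1 μ2 μ3 μ4 μ5 μ6 lam1 lam2 hlam1 hlam2 hParodi hlam1_ne hA hΩ
    d h N s hN]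
  have hμ56' : μ5 + μ6 + lam2 ^ 2 / lam1 ≥ 0 := by rw [neg_div] at hμ56; linarith
  have hw : 0 ≤ A *ᵥ d ⬝ᵥ A *ᵥ d := sum_nonneg fun i _ => mul_self_nonneg _
  nlinarith [mul_nonneg hμ1 (sq_nonneg (d ⬝ᵥ A *ᵥ d)), mul_nonneg hμ56' hw]

end

lemma emb_castSucc (v : Fin 2 → ℝ) (i : Fin 2) : emb v (Fin.castSucc i) = v i :=
  dif_pos i.isLt

theorem leslie_dissipation_lower_bound_general
    (μ1 μ2 μ3 μ4 μ5 μ6 lam1 lam2 : ℝ)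
    (hlam1 : lam1 = μ2 - μ3) (hlam2 : lam2 = μ5 - μ6)
    (hParodi : μ2 + μ3 = μ6 - μ5)
    (hlam1neg : lam1 < 0) (hμ1 : μ1 - lam2 ^ 2 / lam1 ≥ 0)
    (hμ56 : μ5 + μ6 ≥ - lam2 ^ 2 / lam1)
    (A Ω : Matrix (Fin 2) (Fin 2) ℝ)
    (hA : A.IsSymm) (hΩ : Ωᵀ = -Ω)
    (d h N : Fin 3 → ℝ) (s : ℝ)
    (hN : ∀ k : Fin 3, lam1 * N k =
      - lam2 * emb (fun i => ∑ j, A i j * d (Fin.castSucc j)) k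
      - (h k + s * d k)
      + lam2 * (∑ i, ∑ j, A i j * d (Fin.castSucc i) * d (Fin.castSucc j)) * d k)
    (σ : Matrix (Fin 2) (Fin 2) ℝ)
    (hσ : ∀ i j, σ i j =
      μ1 * (∑ k, ∑ l, A k l * d (Fin.castSucc k) * d (Fin.castSucc l))
          * d (Fin.castSucc i) * d (Fin.castSucc j)
      + μ2 * N (Fin.castSucc i) * d (Fin.castSucc j)
      + μ3 * N (Fin.castSucc j) * d (Fin.castSucc i)
      + μ4 * A i j
      + μ5 * (∑ k, A i k * d (Fin.castSucc k)) * d (Fin.castSucc j)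
      + μ6 * (∑ k, A j k * d (Fin.castSucc k)) * d (Fin.castSucc i)) :
    (∑ i, ∑ j, σ i j * (A i j + Ω i j))
      - (∑ i, ((lam2 / lam1) * (∑ j, A i j * d (Fin.castSucc j))
            - (∑ j, Ω i j * d (Fin.castSucc j))) * h (Fin.castSucc i))
      - (lam2 / lam1) * s
          * (∑ i, ∑ j, A i j * d (Fin.castSucc i) * d (Fin.castSucc j))
    ≥ μ4 * (∑ i, ∑ j, (A i j) ^ 2) := by
  set d₂ : Fin 2 → ℝ := d ∘ Fin.castSucc
  have hN₂ : lam1 • (N ∘ Fin.castSucc) = -(lam2 • A *ᵥ d₂) - (h ∘ Fin.castSucc + s • d₂)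
      + (lam2 * (d₂ ⬝ᵥ A *ᵥ d₂)) • d₂ := by
    funext i
    have := hN (Fin.castSucc i)
    rw [emb_castSucc] at this
    simp only [Pi.add_apply, Pi.sub_apply, Pi.neg_apply, Pi.smul_apply, smul_eq_mul,
      Function.comp_apply, dotProduct_mulVec_eq_sum_sum, mulVec_apply_eq_sum, d₂]
    linear_combination this
  have hσ₂ : σ = leslieStress μ1 μ2 μ3 μ4 μ5 μ6 A d₂ (N ∘ Fin.castSucc) := by
    ext i j
    simp only [hσ, leslieStress, dotProduct_mulVec_eq_sum_sum, Matrix.add_apply,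
      Matrix.smul_apply, vecMulVec_apply, smul_eq_mul, mulVec_apply_eq_sum, Function.comp_apply,
      d₂]
    ring
  have key := leslieStress_dissipation_ge μ1 μ2 μ3 μ4 μ5 μ6 lam1 lam2 hlam1 hlam2 hParodi
    hlam1neg.ne hμ1 hμ56 hA hΩ d₂ (h ∘ Fin.castSucc) (N ∘ Fin.castSucc) s hN₂
  rw [← hσ₂, dotProduct_mulVec_eq_sum_sum, frobeniusPairing_self] at key
  exact key

/-- **Pointwise lower bound for the viscous dissipation of the Ericksen–Leslie
system.** Under the Leslie coefficient relations, Parodi's relation and the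
dissipativity conditions, if
`lam1 N = −lam2 (Ad̂,0) − (h + s d) + lam2 (d̂ᵀAd̂) d`, then
`σ : (A+Ω) − ⟨(lam2/lam1)Ad̂ − Ωd̂, ĥ⟩ − (lam2/lam1) s (d̂ᵀAd̂) ≥ μ4 |A|²`. -/
theorem leslie_dissipation_lower_bound
    (μ1 μ2 μ3 μ4 μ5 μ6 lam1 lam2 : ℝ)
    (hlam1 : lam1 = μ2 - μ3) (hlam2 : lam2 = μ5 - μ6)
    (hParodi : μ2 + μ3 = μ6 - μ5)
    (hlam1neg : lam1 < 0) (hμ1 : μ1 - lam2 ^ 2 / lam1 ≥ 0) (hμ4 : μ4 > 0)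
    (hμ56 : μ5 + μ6 ≥ - lam2 ^ 2 / lam1)
    (A Ω : Matrix (Fin 2) (Fin 2) ℝ)
    (hA : A.IsSymm) (hΩ : Ωᵀ = -Ω)
    (d h N : Fin 3 → ℝ) (s : ℝ)
    (hN : ∀ k : Fin 3, lam1 * N k =
      - lam2 * emb (fun i => ∑ j, A i j * d (Fin.castSucc j)) k
      - (h k + s * d k)
      + lam2 * (∑ i, ∑ j, A i j * d (Fin.castSucc i) * d (Fin.castSucc j)) * d k)
    (σ : Matrix (Fin 2) (Fin 2) ℝ)
    (hσ : ∀ i j, σ i j =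
      μ1 * (∑ k, ∑ l, A k l * d (Fin.castSucc k) * d (Fin.castSucc l))
          * d (Fin.castSucc i) * d (Fin.castSucc j)
      + μ2 * N (Fin.castSucc i) * d (Fin.castSucc j)
      + μ3 * N (Fin.castSucc j) * d (Fin.castSucc i)
      + μ4 * A i j
      + μ5 * (∑ k, A i k * d (Fin.castSucc k)) * d (Fin.castSucc j)
      + μ6 * (∑ k, A j k * d (Fin.castSucc k)) * d (Fin.castSucc i)) :
    (∑ i, ∑ j, σ i j * (A i j + Ω i j))
      - (∑ i, ((lam2 / lam1) * (∑ j, A i j * d (Fin.castSucc j))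
            - (∑ j, Ω i j * d (Fin.castSucc j))) * h (Fin.castSucc i))
      - (lam2 / lam1) * s
          * (∑ i, ∑ j, A i j * d (Fin.castSucc i) * d (Fin.castSucc j))
    ≥ μ4 * (∑ i, ∑ j, (A i j) ^ 2) :=
  leslie_dissipation_lower_bound_general μ1 μ2 μ3 μ4 μ5 μ6 lam1 lam2 hlam1 hlam2 hParodi hlam1neg
    hμ1 hμ56 A Ω hA hΩ d h N s hN σ hσ
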